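/- For every v ∈ ℕ, the set C_v is infinite, and every w ∈ C_v satisfies w ≥ v. -/

import Mathlib

open scoped Classical

namespace SL2

/-- the `i`-th digit of `v` in base `p`. -/
def digit (p v i : ℕ) : ℕ := v / p ^ i % p

/-- position of the leading (highest nonzero) digit of `v ≥ 1`. -/
def lead (p v : ℕ) : ℕ := Nat.log p v

/-- a nonempty set of consecutive integers -/
def IsStretch (S : Finset ℕ) : Prop :=
  S.Nonempty ∧ ∀ a ∈ S, ∀ b ∈ S, ∀ c, a ≤ c → c ≤ b → c ∈ S

/-- `S` is down-admissible for `v`. -/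
def DownAdm (p v : ℕ) (S : Finset ℕ) : Prop :=
  (∀ s ∈ S, (s = 0 ∨ s - 1 ∉ S) → digit p v s ≠ 0) ∧
  (∀ s ∈ S, digit p v (s + 1) = 0 → s + 1 ∈ S)

/-- `S` is up-admissible for `v`. -/
def UpAdm (p v : ℕ) (S : Finset ℕ) : Prop :=
  (∀ s ∈ S, (s = 0 ∨ s - 1 ∉ S) → digit p v s ≠ 0) ∧
  (∀ s ∈ S, digit p v (s + 1) = p - 1 → s + 1 ∈ S)

/-- the downward reflection `v[S]`. -/
def reflDown (p v : ℕ) (S : Finset ℕ) : ℕ :=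
  (∑ i ∈ Finset.range (lead p v + 1),
    (if i ∈ S then -((digit p v i : ℤ) * p ^ i) else ((digit p v i : ℤ) * p ^ i))).toNat

/-- the upward reflection `v(S)`. -/
def reflUp (p v : ℕ) (S : Finset ℕ) : ℕ :=
  (∑ i ∈ Finset.range (lead p v + 2),
    (if i ∈ S then -((digit p v i : ℤ) * p ^ i)
     else if i - 1 ∈ S ∧ 1 ≤ i then ((digit p v i : ℤ) + 2) * p ^ i
     else (digit p v i : ℤ) * p ^ i)).toNat

/-- `T` is the down-admissible hull of `S` for `v`. -/
def IsHull (p v : ℕ) (S T : Finset ℕ) : Prop :=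
  DownAdm p v T ∧ S ⊆ T ∧ ∀ T', DownAdm p v T' → S ⊆ T' → T ⊆ T'

noncomputable def hull (p v : ℕ) (S : Finset ℕ) : Finset ℕ :=
  if h : ∃ T, IsHull p v S T then h.choose else ∅

/-- `v[⟨i⟩]`, the downward reflection of `v` along the down-admissible hull of `{i}`. -/
noncomputable def reflDownHull (p v i : ℕ) : ℕ := reflDown p v (hull p v {i})

/-- `D_v`, the set of positions of nonzero non-leading digits of `v`. -/
def Dset (p v : ℕ) : Finset ℕ :=
  (Finset.range (lead p v)).filter (fun i => digit p v i ≠ 0)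

/-- one step of the relation generating `∼_S`. -/
noncomputable def SimStep (p : ℕ) (S : Finset ℕ) (v w : ℕ) : Prop :=
  v ≠ w ∧ S ⊆ Dset p v ∧ S ⊆ Dset p w ∧
    ∃ k ∈ Dset p v, k ∉ S ∧ w = reflDownHull p v k

/-- the equivalence relation `∼_S`. -/
noncomputable def Sim (p : ℕ) (S : Finset ℕ) (v w : ℕ) : Prop :=
  Relation.EqvGen (SimStep p S) v w

/-- the set `C_v`. -/
noncomputable def Cset (p v : ℕ) : Set ℕ := {w | 1 ≤ w ∧ Sim p (Dset p v) v w}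

/-- minimal down-admissible stretch for `v`. -/
def MinDownStretch (p v : ℕ) (S : Finset ℕ) : Prop :=
  DownAdm p v S ∧ IsStretch S ∧
    ∀ T ⊆ S, DownAdm p v T → IsStretch T → T = S

/-- minimal up-admissible stretch for `v`. -/
def MinUpStretch (p v : ℕ) (S : Finset ℕ) : Prop :=
  UpAdm p v S ∧ IsStretch S ∧
    ∀ T ⊆ S, UpAdm p v T → IsStretch T → T = S

/-- adjacency in the graph underlying the quiver algebra. -/
def BlockAdj (p : ℕ) (v w : ℕ) : Prop :=
  (1 ≤ v ∧ 1 ≤ w) ∧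
    ((∃ S, MinDownStretch p v S ∧ w = reflDown p v S) ∨
     (∃ S, MinDownStretch p w S ∧ v = reflDown p w S))

/-- the block `⟨e⟩_p`: the connected component of `e`. -/
def block (p e : ℕ) : Set ℕ := {v | 1 ≤ v ∧ Relation.ReflTransGen (BlockAdj p) e v}

/-- `e` is an eve: exactly one nonzero `p`-adic digit. -/
def IsEve (p e : ℕ) : Prop := 1 ≤ e ∧ Dset p e = ∅

end SL2

/-!
Reflecting `x` along the hull of `{k}` subtracts `2 a_k(x) p^k`: digit `k` becomes
`p - a_k(x)` and the digits below `k` are kept. Hence along a chain starting at `v` the digits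
below `j = j(v)` stay those of `v`, which forces every reflection index `k ∉ D_v` to satisfy
`k ≥ j`. So the residues mod `p^j` and mod `2`, the bound `x ≥ p^j` and the condition
`a_j(x) ∈ {a_j(v), p - a_j(v)}` are invariant on `C_v`, and they force `x = v` or
`x ≥ p^(j+1)`. Conversely, replacing the leading digit `a` of `x` by the two digits `1, p - a`
gives a larger number whose reflection at `j(x)` is `x`; iterating from `v` stays in `C_v`.
-/

namespace SL2

variable {p : ℕ}

section Digits

lemma digit_lt (hp : 2 ≤ p) (v i : ℕ) : digit p v i < p :=
  Nat.mod_lt _ (by omega)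

lemma mod_pow_succ_eq_add_digit (p v i : ℕ) :
    v % p ^ (i + 1) = v % p ^ i + p ^ i * digit p v i := by
  rw [pow_succ, Nat.mod_mul]; rfl

lemma digit_eq_of_mod_eq {x y n i : ℕ} (h : x % p ^ n = y % p ^ n) (hi : i < n) :
    digit p x i = digit p y i := by
  have h' : x % p ^ (i + 1) = y % p ^ (i + 1) := by
    rw [← Nat.mod_mod_of_dvd x (pow_dvd_pow p hi), ← Nat.mod_mod_of_dvd y (pow_dvd_pow p hi), h]
  unfold digit
  rw [← Nat.mod_mul_right_div_self, ← pow_succ, h', pow_succ, Nat.mod_mul_right_div_self]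

lemma digit_add_pow_mul {r d k : ℕ} (hr : r < p ^ k) (hd : d < p) (t : ℕ) :
    digit p (r + p ^ k * (d + p * t)) k = d := by
  unfold digit
  rw [Nat.add_mul_div_left _ _ (r.zero_le.trans_lt hr), Nat.div_eq_of_lt hr, zero_add,
    Nat.add_mul_mod_self_left, Nat.mod_eq_of_lt hd]

lemma add_pow_mul_mod {r k : ℕ} (hr : r < p ^ k) (c : ℕ) : (r + p ^ k * c) % p ^ k = r := by
  rw [Nat.add_mul_mod_self_left, Nat.mod_eq_of_lt hr]

lemma sum_digit_mul_pow (p v n : ℕ) :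
    ∑ i ∈ Finset.range n, digit p v i * p ^ i = v % p ^ n := by
  induction n with
  | zero => simp [Nat.mod_one]
  | succ n ih => rw [Finset.sum_range_succ, ih, mod_pow_succ_eq_add_digit, mul_comm (p ^ n)]

lemma lt_pow_lead_succ (hp : 2 ≤ p) (v : ℕ) : v < p ^ (lead p v + 1) :=
  Nat.lt_pow_succ_log_self (by omega) v

lemma pow_lead_le {v : ℕ} (hv : v ≠ 0) : p ^ lead p v ≤ v := Nat.pow_log_le_self p hv

lemma eq_mod_add_pow_lead_mul_digit (hp : 2 ≤ p) (v : ℕ) :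
    v = v % p ^ lead p v + p ^ lead p v * digit p v (lead p v) := by
  rw [← mod_pow_succ_eq_add_digit, Nat.mod_eq_of_lt (lt_pow_lead_succ hp v)]

lemma digit_lead_ne_zero (hp : 2 ≤ p) {v : ℕ} (hv : v ≠ 0) : digit p v (lead p v) ≠ 0 := by
  intro h
  have := eq_mod_add_pow_lead_mul_digit hp v
  have := Nat.mod_lt v (show 0 < p ^ lead p v by positivity)
  have := pow_lead_le (p := p) hv
  simp only [h, mul_zero, add_zero] at *
  omega

lemma mem_Dset {x i : ℕ} : i ∈ Dset p x ↔ i < lead p x ∧ digit p x i ≠ 0 := by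
  simp [Dset]

lemma mod_pow_eq_of_digits_eq_zero {x k m : ℕ} (hkm : k ≤ m)
    (hzero : ∀ i, k < i → i ≤ m → digit p x i = 0) : x % p ^ (m + 1) = x % p ^ (k + 1) := by
  induction m, hkm using Nat.le_induction with
  | base => rfl
  | succ m hkm ih =>
    rw [mod_pow_succ_eq_add_digit, hzero (m + 1) (by omega) le_rfl, mul_zero, add_zero,
      ih fun i h1 h2 => hzero i h1 (by omega)]

end Digits

section Reflection

variable {x : ℕ}

lemma hull_eq {v : ℕ} {S T : Finset ℕ} (hT : IsHull p v S T) : hull p v S = T := by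
  have hex : ∃ T, IsHull p v S T := ⟨T, hT⟩
  have hchoose := hex.choose_spec
  rw [hull, dif_pos hex]
  exact subset_antisymm (hchoose.2.2 T hT.1 hT.2.1) (hT.2.2 _ hchoose.1 hchoose.2.1)

lemma exists_next_nonzero_digit (hp : 2 ≤ p) {k : ℕ} (hk : k ∈ Dset p x) :
    ∃ m, k ≤ m ∧ m + 1 ≤ lead p x ∧ digit p x (m + 1) ≠ 0 ∧
      ∀ i, k < i → i ≤ m → digit p x i = 0 := by
  obtain ⟨hkL, hdk⟩ := mem_Dset.1 hk
  have hx : x ≠ 0 := by rintro rfl; simp [digit] at hdk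
  have hlead : k ≤ lead p x - 1 ∧ digit p x (lead p x - 1 + 1) ≠ 0 :=
    ⟨by omega, by rw [Nat.sub_add_cancel (by omega)]; exact digit_lead_ne_zero hp hx⟩
  have hex : ∃ m, k ≤ m ∧ digit p x (m + 1) ≠ 0 := ⟨_, hlead⟩
  refine ⟨Nat.find hex, (Nat.find_spec hex).1, ?_, (Nat.find_spec hex).2, ?_⟩
  · have := Nat.find_min' hex hlead
    omega
  · intro i hki hi
    by_contra hne
    exact Nat.find_min hex (show i - 1 < Nat.find hex by omega)
      ⟨by omega, by rwa [Nat.sub_add_cancel (by omega)]⟩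

lemma isHull_Icc {k m : ℕ} (hk : digit p x k ≠ 0) (hkm : k ≤ m) (hm : digit p x (m + 1) ≠ 0)
    (hzero : ∀ i, k < i → i ≤ m → digit p x i = 0) : IsHull p x {k} (Finset.Icc k m) := by
  refine ⟨⟨?_, ?_⟩, by simpa using hkm, fun T hT hkT i hi => ?_⟩
  · intro s hs hstart
    rw [Finset.mem_Icc] at hs
    obtain rfl | hks := eq_or_lt_of_le hs.1
    · exact hk
    · rcases hstart with h | h
      · omega
      · exact absurd (Finset.mem_Icc.2 ⟨by omega, by omega⟩) h
  · intro s hs h0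
    rw [Finset.mem_Icc] at hs ⊢
    have : s ≠ m := by rintro rfl; exact hm h0
    omega
  · obtain ⟨hki, him⟩ := Finset.mem_Icc.1 hi
    induction i, hki using Nat.le_induction with
    | base => exact Finset.singleton_subset_iff.1 hkT
    | succ n hkn ih =>
      exact hT.2 n (ih (Finset.mem_Icc.2 ⟨hkn, by omega⟩) (by omega))
        (hzero (n + 1) (by omega) him)

lemma reflDown_Icc (hp : 2 ≤ p) {k m : ℕ} (hkm : k ≤ m) (hm : m ≤ lead p x)
    (hzero : ∀ i, k < i → i ≤ m → digit p x i = 0) :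
    reflDown p x (Finset.Icc k m) = x - 2 * (p ^ k * digit p x k) := by
  have hsum : ∑ i ∈ Finset.range (lead p x + 1), (digit p x i : ℤ) * p ^ i = x := by
    exact_mod_cast (sum_digit_mul_pow p x _).trans (Nat.mod_eq_of_lt (lt_pow_lead_succ hp x))
  have hsumIcc : ∑ i ∈ Finset.Icc k m, (digit p x i : ℤ) * p ^ i = digit p x k * p ^ k := by
    refine Finset.sum_eq_single_of_mem k (Finset.mem_Icc.2 ⟨le_rfl, hkm⟩) fun i hi hik => ?_
    rw [Finset.mem_Icc] at hi
    simp [hzero i (by omega) hi.2]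
  have hIcc : Finset.Icc k m ⊆ Finset.range (lead p x + 1) := fun i hi => by
    simp only [Finset.mem_Icc, Finset.mem_range] at hi ⊢; omega
  have hsplit : ∀ i, (if i ∈ Finset.Icc k m then -((digit p x i : ℤ) * p ^ i)
      else (digit p x i : ℤ) * p ^ i) = (digit p x i : ℤ) * p ^ i -
        2 * (if i ∈ Finset.Icc k m then (digit p x i : ℤ) * p ^ i else 0) := by
    intro i; split_ifs <;> ring
  rw [reflDown, Finset.sum_congr rfl fun i _ => hsplit i, Finset.sum_sub_distrib,
    ← Finset.mul_sum, Finset.sum_ite_mem, Finset.inter_eq_right.2 hIcc, hsum, hsumIcc,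
    ← Int.toNat_sub]
  push_cast
  ring_nf

lemma reflDownHull_spec (hp : 2 ≤ p) {k : ℕ} (hk : k ∈ Dset p x) :
    ∃ t, x = x % p ^ k + p ^ k * (digit p x k + p * (t + 1)) ∧
      reflDownHull p x k = x % p ^ k + p ^ k * (p - digit p x k + p * t) := by
  obtain ⟨m, hkm, hmL, hm, hzero⟩ := exists_next_nonzero_digit hp hk
  have hdk := (mem_Dset.1 hk).2
  have hdlt := digit_lt hp x k
  have hQ : x / p ^ (m + 1) ≠ 0 := fun h => hm (by rw [digit, h, Nat.zero_mod])
  obtain ⟨t, ht⟩ := Nat.exists_eq_succ_of_ne_zero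
    (mul_ne_zero (pow_ne_zero (m - k) (by omega : p ≠ 0)) hQ)
  have hx : x = x % p ^ k + p ^ k * (digit p x k + p * (t + 1)) := by
    calc x = x % p ^ (m + 1) + p ^ (m + 1) * (x / p ^ (m + 1)) := (Nat.mod_add_div x _).symm
      _ = x % p ^ k + p ^ k * digit p x k + p ^ (k + 1 + (m - k)) * (x / p ^ (m + 1)) := by
        rw [mod_pow_eq_of_digits_eq_zero hkm hzero, mod_pow_succ_eq_add_digit,
          show k + 1 + (m - k) = m + 1 by omega]
      _ = _ := by rw [← Nat.succ_eq_add_one t, ← ht]; ring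
  refine ⟨t, hx, ?_⟩
  rw [reflDownHull, hull_eq (isHull_Icc hdk hkm hm hzero), reflDown_Icc hp hkm (by omega) hzero]
  generalize x % p ^ k = r at hx
  generalize p ^ k = P at hx
  generalize digit p x k = a at hx hdlt ⊢
  obtain ⟨c, rfl⟩ : ∃ c, p = a + c := ⟨p - a, by omega⟩
  rw [Nat.add_sub_cancel_left]
  refine Nat.sub_eq_of_eq_add ?_
  rw [hx]
  ring

end Reflection

section Invariant

def CInvariant (p v x : ℕ) : Prop :=
  x % p ^ lead p v = v % p ^ lead p v ∧ x % 2 = v % 2 ∧ p ^ lead p v ≤ x ∧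
    (digit p x (lead p v) = digit p v (lead p v) ∨
      digit p x (lead p v) = p - digit p v (lead p v))

lemma lead_le_of_digit_ne_zero {v x k : ℕ} (hmod : x % p ^ lead p v = v % p ^ lead p v)
    (hx : digit p x k ≠ 0) (hk : k ∉ Dset p v) : lead p v ≤ k := by
  by_contra! h
  exact hk (mem_Dset.2 ⟨h, digit_eq_of_mod_eq hmod h ▸ hx⟩)

lemma cInvariant_iff_of_reflection (hp : 2 ≤ p) {v x y r k a t : ℕ} (hr : r < p ^ k)
    (ha : a ≠ 0) (hap : a < p) (hk : lead p v ≤ k)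
    (hx : x = r + p ^ k * (a + p * (t + 1))) (hy : y = r + p ^ k * (p - a + p * t)) :
    CInvariant p v x ↔ CInvariant p v y := by
  have hmod : x % p ^ k = y % p ^ k := by rw [hx, hy, add_pow_mul_mod hr, add_pow_mul_mod hr]
  have hmod_lead : x % p ^ lead p v = y % p ^ lead p v := by
    rw [← Nat.mod_mod_of_dvd x (pow_dvd_pow p hk), ← Nat.mod_mod_of_dvd y (pow_dvd_pow p hk),
      hmod]
  have hxy : x = y + 2 * (p ^ k * a) := by
    subst hx hy
    obtain ⟨c, rfl⟩ : ∃ c, p = a + c := ⟨p - a, by omega⟩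
    rw [Nat.add_sub_cancel_left]
    ring
  have hpow : p ^ lead p v ≤ p ^ k := Nat.pow_le_pow_right (by omega) hk
  have hy_ge : p ^ k ≤ y := hy ▸ le_add_left (Nat.le_mul_of_pos_right _ (by omega))
  have hdig : digit p x (lead p v) = digit p y (lead p v) ∨
      (digit p x (lead p v) = a ∧ digit p y (lead p v) = p - a) := by
    rcases hk.lt_or_eq with hlt | rfl
    · exact Or.inl (digit_eq_of_mod_eq hmod hlt)
    · exact Or.inr
        ⟨hx ▸ digit_add_pow_mul hr hap _, hy ▸ digit_add_pow_mul hr (by omega) _⟩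
  have := digit_lt hp v (lead p v)
  unfold CInvariant
  rw [hmod_lead]
  omega

lemma cInvariant_iff_of_simStep (hp : 2 ≤ p) {v x y : ℕ} (h : SimStep p (Dset p v) x y) :
    CInvariant p v x ↔ CInvariant p v y := by
  obtain ⟨-, -, -, k, hk, hkv, rfl⟩ := h
  obtain ⟨t, hx, hy⟩ := reflDownHull_spec hp hk
  have hdk := (mem_Dset.1 hk).2
  have hdlt := digit_lt hp x k
  have hr : x % p ^ k < p ^ k := Nat.mod_lt x (by positivity)
  have hiff (hle : lead p v ≤ k) := cInvariant_iff_of_reflection hp hr hdk hdlt hle hx hy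
  constructor
  · intro hI
    exact (hiff (lead_le_of_digit_ne_zero hI.1 hdk hkv)).1 hI
  · intro hI
    have hdy : digit p (reflDownHull p x k) k ≠ 0 := by
      rw [hy, digit_add_pow_mul hr (by omega)]
      omega
    exact (hiff (lead_le_of_digit_ne_zero hI.1 hdy hkv)).2 hI

lemma cInvariant_of_sim (hp : 2 ≤ p) {v w : ℕ} (hv : v ≠ 0) (h : Sim p (Dset p v) v w) :
    CInvariant p v w := by
  have hiff : ∀ x y, Sim p (Dset p v) x y → (CInvariant p v x ↔ CInvariant p v y) := by
    intro x y hxy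
    induction hxy with
    | rel x y hxy => exact cInvariant_iff_of_simStep hp hxy
    | refl => exact Iff.rfl
    | symm x y _ ih => exact ih.symm
    | trans x y z _ _ ihxy ihyz => exact ihxy.trans ihyz
  exact (hiff v w h).1 ⟨rfl, rfl, pow_lead_le hv, Or.inl rfl⟩

lemma le_of_cInvariant (hp : p.Prime) {v x : ℕ} (hv : v ≠ 0) (h : CInvariant p v x) :
    v ≤ x := by
  obtain ⟨hmod, hpar, hle, hdig⟩ := h
  have hp2 := hp.two_le
  rcases le_or_gt (p ^ (lead p v + 1)) x with hbig | hsmall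
  · exact (lt_pow_lead_succ hp2 v).le.trans hbig
  have hx := eq_mod_add_pow_lead_mul_digit hp2 x
  have hv' := eq_mod_add_pow_lead_mul_digit hp2 v
  rw [show lead p x = lead p v from Nat.log_eq_of_pow_le_of_lt_pow hle hsmall] at hx
  have hav := digit_lt hp2 v (lead p v)
  have hav0 := digit_lead_ne_zero hp2 hv
  suffices hdig' : digit p x (lead p v) = digit p v (lead p v) by
    rw [hdig', hmod, ← hv'] at hx
    exact hx.ge
  rcases hdig with hdig | hdig
  · exact hdig
  rcases hp.eq_two_or_odd' with rfl | hodd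
  · omega
  -- for odd `p`, `x + v = 2 (v mod p^L) + p^L p` is odd, against `x ≡ v (mod 2)`
  exfalso
  have hsum : x + v = 2 * (v % p ^ lead p v) + p ^ lead p v * p := by
    rw [hdig, hmod] at hx
    have := congrArg (p ^ lead p v * ·) (Nat.sub_add_cancel hav.le)
    simp only [mul_add] at this
    omega
  have heven : Even (x + v) := Nat.even_iff.2 (by omega)
  rw [hsum] at heven
  exact Nat.not_even_iff_odd.2 ((even_two_mul _).add_odd (hodd.pow.mul hodd)) heven

end Invariant

section Ascend

def ascend (p x : ℕ) : ℕ := x % p ^ lead p x + p ^ lead p x * (p - digit p x (lead p x) + p)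

lemma pow_lead_succ_le_ascend (x : ℕ) : p ^ (lead p x + 1) ≤ ascend p x := by
  rw [ascend, pow_succ]
  exact le_add_left (Nat.mul_le_mul_left _ (Nat.le_add_left _ _))

lemma lt_ascend (hp : 2 ≤ p) (x : ℕ) : x < ascend p x :=
  (lt_pow_lead_succ hp x).trans_le (pow_lead_succ_le_ascend x)

lemma lead_ascend (hp : 2 ≤ p) {x : ℕ} (hx : x ≠ 0) : lead p (ascend p x) = lead p x + 1 := by
  refine Nat.log_eq_of_pow_le_of_lt_pow (pow_lead_succ_le_ascend x) ?_
  have hr : x % p ^ lead p x < p ^ lead p x := Nat.mod_lt x (by positivity)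
  have hd : p - digit p x (lead p x) + p + 1 ≤ p * p := by
    have := digit_lead_ne_zero hp hx
    have : p - digit p x (lead p x) + p + 1 ≤ 2 * p := by omega
    nlinarith
  calc ascend p x < p ^ lead p x * (p - digit p x (lead p x) + p + 1) := by rw [ascend]; linarith
    _ ≤ p ^ lead p x * (p * p) := Nat.mul_le_mul_left _ hd
    _ = p ^ (lead p x + 1 + 1) := by ring

lemma ascend_mod_pow_lead (x : ℕ) : ascend p x % p ^ lead p x = x % p ^ lead p x := by
  rw [ascend, Nat.add_mul_mod_self_left, Nat.mod_mod]

lemma digit_ascend (hp : 2 ≤ p) {x : ℕ} (hx : x ≠ 0) :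
    digit p (ascend p x) (lead p x) = p - digit p x (lead p x) := by
  have hd := digit_lead_ne_zero hp hx
  have h := digit_add_pow_mul (Nat.mod_lt x (pow_pos (by omega) (lead p x)))
    (show p - digit p x (lead p x) < p by omega) 1
  rwa [mul_one] at h

lemma lead_mem_Dset_ascend (hp : 2 ≤ p) {x : ℕ} (hx : x ≠ 0) :
    lead p x ∈ Dset p (ascend p x) := by
  have := digit_lt hp x (lead p x)
  refine mem_Dset.2 ⟨by rw [lead_ascend hp hx]; omega, ?_⟩
  rw [digit_ascend hp hx]
  omega

lemma reflDownHull_ascend (hp : 2 ≤ p) {x : ℕ} (hx : x ≠ 0) :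
    reflDownHull p (ascend p x) (lead p x) = x := by
  obtain ⟨t, hasc, hrefl⟩ := reflDownHull_spec hp (lead_mem_Dset_ascend hp hx)
  rw [ascend_mod_pow_lead, digit_ascend hp hx] at hasc hrefl
  have ht : t = 0 := by
    nth_rewrite 1 [ascend] at hasc
    have := Nat.eq_of_mul_eq_mul_left (by positivity) (Nat.add_left_cancel hasc)
    nlinarith
  have := digit_lt hp x (lead p x)
  rw [hrefl, ht, mul_zero, add_zero, Nat.sub_sub_self this.le]
  exact (eq_mod_add_pow_lead_mul_digit hp x).symm

lemma Dset_subset_of_mod_eq {v z : ℕ} (hvz : v ≤ z)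
    (hmod : z % p ^ lead p v = v % p ^ lead p v) : Dset p v ⊆ Dset p z := by
  intro i hi
  obtain ⟨hiv, hdi⟩ := mem_Dset.1 hi
  exact mem_Dset.2 ⟨hiv.trans_le (Nat.log_mono_right hvz), digit_eq_of_mod_eq hmod hiv ▸ hdi⟩

lemma ascend_mod_pow_lead_of_le {v x : ℕ} (hvx : v ≤ x)
    (hmod : x % p ^ lead p v = v % p ^ lead p v) :
    ascend p x % p ^ lead p v = v % p ^ lead p v := by
  have hdvd : p ^ lead p v ∣ p ^ lead p x := pow_dvd_pow p (Nat.log_mono_right hvx)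
  rw [← Nat.mod_mod_of_dvd _ hdvd, ascend_mod_pow_lead, Nat.mod_mod_of_dvd _ hdvd, hmod]

lemma simStep_ascend (hp : 2 ≤ p) {v x : ℕ} (hv : v ≠ 0) (hvx : v ≤ x)
    (hmod : x % p ^ lead p v = v % p ^ lead p v) : SimStep p (Dset p v) (ascend p x) x := by
  have hx : x ≠ 0 := by omega
  refine ⟨(lt_ascend hp x).ne', Dset_subset_of_mod_eq (hvx.trans (lt_ascend hp x).le)
    (ascend_mod_pow_lead_of_le hvx hmod), Dset_subset_of_mod_eq hvx hmod, lead p x,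
    lead_mem_Dset_ascend hp hx, fun h => ?_, (reflDownHull_ascend hp hx).symm⟩
  exact (mem_Dset.1 h).1.not_ge (Nat.log_mono_right hvx)

lemma iterate_ascend_spec (hp : 2 ≤ p) {v : ℕ} (hv : v ≠ 0) (n : ℕ) :
    v ≤ (ascend p)^[n] v ∧ (ascend p)^[n] v % p ^ lead p v = v % p ^ lead p v ∧
      Sim p (Dset p v) v ((ascend p)^[n] v) := by
  induction n with
  | zero => exact ⟨le_rfl, rfl, Relation.EqvGen.refl v⟩
  | succ n ih =>
    obtain ⟨hle, hmod, hsim⟩ := ih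
    rw [Function.iterate_succ_apply']
    exact ⟨hle.trans (lt_ascend hp _).le, ascend_mod_pow_lead_of_le hle hmod,
      hsim.trans _ _ _ (.symm _ _ (.rel _ _ (simStep_ascend hp hv hle hmod)))⟩

end Ascend

end SL2

/-- For every `v ∈ ℕ`, the set `C_v` is infinite and every `w ∈ C_v`
satisfies `w ≥ v`. -/
theorem SL2.stmt1 (p : ℕ) (hp : p.Prime) (v : ℕ) (hv : 1 ≤ v) :
    (SL2.Cset p v).Infinite ∧ ∀ w ∈ SL2.Cset p v, v ≤ w := by
  have hp2 := hp.two_le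
  have hv0 : v ≠ 0 := by omega
  refine ⟨?_, fun w hw => le_of_cInvariant hp hv0 (cInvariant_of_sim hp2 hv0 hw.2)⟩
  have hmono : StrictMono fun n => (ascend p)^[n] v := strictMono_nat_of_lt_succ fun n => by
    rw [Function.iterate_succ_apply']
    exact lt_ascend hp2 _
  exact Set.infinite_of_injective_forall_mem hmono.injective fun n =>
    ⟨hv.trans (iterate_ascend_spec hp2 hv0 n).1, (iterate_ascend_spec hp2 hv0 n).2.2⟩
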